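/- Let M be a conditional oriented matroid on I, F a flat with basic set B, and X a circuit of the contraction M^F. Then the monomial ∏_{b∈B} z_b · ∏_{i∈Supp(X)} y_i^{X(i)} lies in the vanishing ideal I(Z_M) of the big locus (hence in gr I(Z_M), being homogeneous). -/

import Mathlib

/-- The composition `X ∘ Y` of signed subsets of `I`. -/
def scomp {I : Type*} (X Y : I → SignType) : I → SignType :=
  fun i => if X i ≠ 0 then X i else Y i

/-- The separating set of two signed subsets. -/
def sepSet {I : Type*} (X Y : I → SignType) : Set I :=
  {i | X i = -(Y i) ∧ X i ≠ 0}

/-- A conditional oriented matroid on the ground set `I`. -/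
structure IsCOM {I : Type*} (M : Set (I → SignType)) : Prop where
  faceSym : ∀ X ∈ M, ∀ Y ∈ M, scomp X (-Y) ∈ M
  strongElim : ∀ X ∈ M, ∀ Y ∈ M, ∀ i ∈ sepSet X Y,
    ∃ Z ∈ M, Z i = 0 ∧ ∀ j ∉ sepSet X Y, Z j = scomp X Y j

/-- The flat (zero set) of a covector. -/
def sflat {I : Type*} (X : I → SignType) : Set I := {i | X i = 0}

/-- The collection of flats of a conditional oriented matroid. -/
def flats {I : Type*} (M : Set (I → SignType)) : Set (Set I) :=
  {F | ∃ X ∈ M, sflat X = F}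

/-- `F` is the minimal flat of `M` containing `C` (the closure `C̄` of `C`). -/
def minimalFlatOf {I : Type*} (M : Set (I → SignType)) (C F : Set I) : Prop :=
  F ∈ flats M ∧ C ⊆ F ∧ ∀ F' ∈ flats M, C ⊆ F' → F ⊆ F'

/-- `B` is basic for the flat `F`: the closure of `B` is `F` and no proper
subset of `B` has closure `F`. -/
def IsBasic {I : Type*} (M : Set (I → SignType)) (B : Finset I) (F : Set I) : Prop :=
  minimalFlatOf M (B : Set I) F ∧
    ∀ B' ⊆ B, minimalFlatOf M (B' : Set I) F → B' = B

/-- The 0/1 point `z_X ∈ K^{I × {+,-,0}}` attached to a covector `X`. -/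
def bigPoint (K : Type*) [Field K] {I : Type*} (X : I → SignType) :
    I × SignType → K :=
  fun p => if X p.1 = p.2 then 1 else 0

/-- The big locus `Z_M ⊆ K^{I × {+,-,0}}` of a conditional oriented matroid. -/
def bigLocus (K : Type*) [Field K] {I : Type*} (M : Set (I → SignType)) :
    Set (I × SignType → K) :=
  (fun X => bigPoint K X) '' M

/-- The vanishing ideal of a set of points of `K^σ`. -/
noncomputable def vanishingIdeal (K : Type*) [Field K] {σ : Type*} (Z : Set (σ → K)) :
    Ideal (MvPolynomial σ K) :=
  ⨅ z ∈ Z, RingHom.ker (MvPolynomial.eval z)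

/-- The associated graded ideal `gr I(Z)`, generated by the top-degree
homogeneous components of the nonzero elements of `I(Z)`. -/
noncomputable def grIdeal (K : Type*) [Field K] {σ : Type*} (Z : Set (σ → K)) :
    Ideal (MvPolynomial σ K) :=
  Ideal.span {g | ∃ f ∈ vanishingIdeal K Z, f ≠ 0 ∧
    g = MvPolynomial.homogeneousComponent f.totalDegree f}

/-- `X` is (a representative on `I` of) a circuit of the contraction `M^F`:
`X` vanishes on `F`; for every covector `Y` of `M` vanishing on `F` the
compositions `X ∘ Y` and `Y` differ somewhere outside `F`; and every proper
signed subset `Z` of `X` composes trivially with some covector of `M^F`. -/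
def IsCtrCircuit {I : Type*} (M : Set (I → SignType)) (F : Set I)
    (X : I → SignType) : Prop :=
  (∀ i ∈ F, X i = 0) ∧
  (∀ Y ∈ M, (∀ j ∈ F, Y j = 0) → ∃ i ∉ F, scomp X Y i ≠ Y i) ∧
  (∀ Z : I → SignType, (∀ i, Z i = 0 ∨ Z i = X i) → Z ≠ X →
    ∃ Y₀ ∈ M, (∀ j ∈ F, Y₀ j = 0) ∧ ∀ i ∉ F, scomp Z Y₀ i = Y₀ i)

open MvPolynomial

/-!
If the point `z_Y` of a covector `Y` does not annihilate the monomial, then `Y` vanishes on `B`,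
hence on its closure `F`, so `Y` is a covector of `M^F`; and `Y` agrees with `X` on `Supp X`,
i.e. `X ∘ Y = Y`, which a circuit of `M^F` forbids. Being homogeneous, the monomial is its own
top-degree component, so it also lies in `gr I(Z_M)`.
-/

section BigLocus

variable {K : Type*} [Field K] {I : Type*}

lemma eval_bigPoint_prod_X_ne_zero_iff {ι : Type*} (Y : I → SignType) (s : Finset ι)
    (g : ι → I × SignType) :
    eval (bigPoint K Y) (∏ j ∈ s, X (g j)) ≠ 0 ↔ ∀ j ∈ s, Y (g j).1 = (g j).2 := by
  simp [map_prod, Finset.prod_ne_zero_iff, bigPoint]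

lemma mem_vanishingIdeal_bigLocus_iff {M : Set (I → SignType)}
    {f : MvPolynomial (I × SignType) K} :
    f ∈ _root_.vanishingIdeal K (bigLocus K M) ↔ ∀ Y ∈ M, eval (bigPoint K Y) f = 0 := by
  simp [_root_.vanishingIdeal, bigLocus, RingHom.mem_ker]

end BigLocus

lemma isHomogeneous_prod_X {R σ ι : Type*} [CommSemiring R] (s : Finset ι) (g : ι → σ) :
    (∏ j ∈ s, X (g j) : MvPolynomial σ R).IsHomogeneous s.card := by
  simpa using IsHomogeneous.prod s (fun j => (X (g j) : MvPolynomial σ R)) (fun _ => 1)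
    fun j _ => isHomogeneous_X R (g j)

lemma mem_grIdeal_of_isHomogeneous {K σ : Type*} [Field K] {Z : Set (σ → K)}
    {f : MvPolynomial σ K} {n : ℕ} (hf : f ∈ _root_.vanishingIdeal K Z)
    (hhom : f.IsHomogeneous n) :
    f ∈ grIdeal K Z := by
  obtain rfl | hne := eq_or_ne f 0
  · exact zero_mem _
  refine Ideal.subset_span ⟨f, hf, hne, ?_⟩
  rw [hhom.totalDegree hne, homogeneousComponent_eq_self hhom]

section Contraction

variable {I : Type*} {M : Set (I → SignType)}

lemma minimalFlatOf.subset_sflat {C F : Set I} (h : minimalFlatOf M C F) {Y : I → SignType}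
    (hY : Y ∈ M) (hC : C ⊆ sflat Y) : F ⊆ sflat Y :=
  h.2.2 _ ⟨Y, hY, rfl⟩ hC

/-- A circuit of `M^F` is not conformal to any covector of `M^F`. -/
lemma IsCtrCircuit.exists_ne_of_subset_sflat {F : Set I} {Xc : I → SignType}
    (hXc : IsCtrCircuit M F Xc) {Y : I → SignType} (hY : Y ∈ M) (hF : F ⊆ sflat Y) :
    ∃ i, Xc i ≠ 0 ∧ Y i ≠ Xc i := by
  obtain ⟨i, -, hi⟩ := hXc.2.1 Y hY hF
  by_cases hXi : Xc i = 0
  · simp [scomp, hXi] at hi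
  · exact ⟨i, hXi, fun h => hi (by simp [scomp, hXi, h])⟩

end Contraction

theorem basic_times_circuit_in_gr_general (K : Type*) [Field K] {I : Type*} [Fintype I]
    {M : Set (I → SignType)}
    (B : Finset I) (F : Set I) (hB : IsBasic M B F)
    (Xc : I → SignType) (hXc : IsCtrCircuit M F Xc) :
    ((∏ b ∈ B, X (b, (0 : SignType))) *
        ∏ i ∈ Finset.univ.filter (fun i => Xc i ≠ 0), X (i, Xc i)
      ∈ _root_.vanishingIdeal K (bigLocus K M)) ∧
    ((∏ b ∈ B, X (b, (0 : SignType))) *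
        ∏ i ∈ Finset.univ.filter (fun i => Xc i ≠ 0), X (i, Xc i)
      ∈ grIdeal K (bigLocus K M)) := by
  have hvan : (∏ b ∈ B, X (b, (0 : SignType))) *
      ∏ i ∈ Finset.univ.filter (fun i => Xc i ≠ 0), X (i, Xc i)
      ∈ _root_.vanishingIdeal K (bigLocus K M) := by
    refine (mem_vanishingIdeal_bigLocus_iff (K := K)).2 fun Y hY => ?_
    by_contra hY0
    rw [map_mul, ← ne_eq, mul_ne_zero_iff, eval_bigPoint_prod_X_ne_zero_iff,
      eval_bigPoint_prod_X_ne_zero_iff] at hY0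
    obtain ⟨hYB, hYXc⟩ := hY0
    obtain ⟨i, hi, hYi⟩ :=
      hXc.exists_ne_of_subset_sflat hY (hB.1.subset_sflat hY hYB)
    exact hYi (hYXc i (Finset.mem_filter.2 ⟨Finset.mem_univ i, hi⟩))
  exact ⟨hvan, mem_grIdeal_of_isHomogeneous hvan
    ((isHomogeneous_prod_X _ _).mul (isHomogeneous_prod_X _ _))⟩

/-- if `B` is a basic set for a flat `F` and `X` is a circuit of
the contraction `M^F`, then `∏_{b∈B} z_b · ∏_{i∈Supp(X)} y_i^{X(i)}` lies in
the vanishing ideal `I(Z_M)` of the big locus, hence (being homogeneous) in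
`gr I(Z_M)`. -/
theorem basic_times_circuit_in_gr (K : Type*) [Field K] {I : Type*} [Fintype I]
    [DecidableEq I] {M : Set (I → SignType)} (hM : IsCOM M)
    (B : Finset I) (F : Set I) (hB : IsBasic M B F)
    (Xc : I → SignType) (hXc : IsCtrCircuit M F Xc) :
    ((∏ b ∈ B, X (b, (0 : SignType))) *
        ∏ i ∈ Finset.univ.filter (fun i => Xc i ≠ 0), X (i, Xc i)
      ∈ _root_.vanishingIdeal K (bigLocus K M)) ∧
    ((∏ b ∈ B, X (b, (0 : SignType))) *
        ∏ i ∈ Finset.univ.filter (fun i => Xc i ≠ 0), X (i, Xc i)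
      ∈ grIdeal K (bigLocus K M)) :=
  basic_times_circuit_in_gr_general K B F hB Xc hXc
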